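/- Let a_max > 0, s > 0, 0 < c_r ≤ c_s, λ > 1, c_c ≥ 0, c_d ≥ 0 and T_D ≥ 0. Then the six continuous-state domains D1 (Free driving), D2 (Following I), D3 (Following II), D4 (Closing in), D5 (Danger) and D6 (Unsafe) are pairwise disjoint on the set {x ∈ ℝ⁶ : x3 ≥ 0}; that is, every x ∈ ℝ⁶ with x3 ≥ 0 belongs to at most one of the six domains. -/
import Mathlib


/- Continuous state `x : Fin 6 → ℝ`; following the paper, `x 0` is the headway `x1`,
`x 1` is the relative speed `x2 = v̂ − v`, `x 2` is the leader speed `x3 = v̂`. -/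

noncomputable def TE (amax : ℝ) (x : Fin 6 → ℝ) : ℝ := |x 1| / amax
noncomputable def TR (amax : ℝ) (x : Fin 6 → ℝ) : ℝ := |x 2 - x 1| / amax
noncomputable def TS (amax lam : ℝ) (x : Fin 6 → ℝ) : ℝ := lam * |x 2 - x 1| / amax

/-- Emergency distance `ΔE`. -/
noncomputable def deltaE (amax s : ℝ) (x : Fin 6 → ℝ) : ℝ :=
  if 0 < x 1 then s else s + (1/2) * amax * (TE amax x)^2

/-- Risky distance `ΔR`. -/
noncomputable def deltaR (amax s cr : ℝ) (x : Fin 6 → ℝ) : ℝ :=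
  if 0 < x 1 then s + cr * TR amax x * x 2
  else s + cr * TR amax x * x 2 + (1/2) * amax * (TE amax x)^2

/-- Safe distance `ΔS`. -/
noncomputable def deltaS (amax s cs lam : ℝ) (x : Fin 6 → ℝ) : ℝ :=
  if 0 < x 1 then s + cs * TS amax lam x * x 2
  else s + cs * TS amax lam x * x 2 + (1/2) * amax * (TE amax x)^2

/-- Interaction distance `ΔD`. -/
noncomputable def deltaD (amax s cs lam cd TD : ℝ) (x : Fin 6 → ℝ) : ℝ :=
  if 0 < x 1 then deltaS amax s cs lam x
  else s + cd * TD * (x 2 - x 1)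

/-- Approaching distance `ΔC`. -/
noncomputable def deltaC (amax s cs lam cc : ℝ) (x : Fin 6 → ℝ) : ℝ :=
  if 0 < x 1 then deltaS amax s cs lam x
  else deltaS amax s cs lam x + cc * Real.sqrt (-(x 1))

/-- The six continuous-state domains `D1,…,D6` of the hybrid automaton
(Free driving, Following I, Following II, Closing in, Danger, Unsafe). -/
noncomputable def Dom (amax s cr cs lam cc cd TD : ℝ) : Fin 6 → Set (Fin 6 → ℝ) :=
  ![ -- D1 : Free driving
    {x | x 0 > deltaS amax s cs lam x ∧ x 1 ≥ 0} ∪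
      {x | x 0 > max (deltaD amax s cs lam cd TD x) (deltaS amax s cs lam x) ∧ x 1 < 0},
    -- D2 : Following I
    {x | x 1 < 0 ∧ max (deltaS amax s cs lam x) (deltaC amax s cs lam cc x) < x 0 ∧
      x 0 ≤ deltaD amax s cs lam cd TD x},
    -- D3 : Following II
    {x | x 1 ≤ 0 ∧ deltaS amax s cs lam x < x 0 ∧
        x 0 < min (deltaD amax s cs lam cd TD x) (deltaC amax s cs lam cc x)} ∪
      {x | x 1 > 0 ∧ deltaR amax s cr x < x 0 ∧ x 0 ≤ deltaS amax s cs lam x},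
    -- D4 : Closing in
    {x | x 1 ≤ 0 ∧ deltaR amax s cr x < x 0 ∧ x 0 ≤ deltaS amax s cs lam x} ∪
      {x | x 1 = 0 ∧ x 0 = deltaR amax s cr x},
    -- D5 : Danger
    {x | deltaE amax s x ≤ x 0 ∧ x 0 ≤ deltaR amax s cr x} \
      {x | x 1 = 0 ∧ x 0 = deltaR amax s cr x},
    -- D6 : Unsafe
    {x | x 0 < deltaE amax s x}]

/-- The six domains are pairwise disjoint on `{x : x3 ≥ 0}`: every state with
nonnegative leader speed belongs to at most one of the six domains. -/
theorem domains_pairwise_disjoint (amax s cr cs lam cc cd TD : ℝ)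
    (hamax : 0 < amax) (hs : 0 < s) (hcr : 0 < cr) (hcrcs : cr ≤ cs) (hlam : 1 < lam)
    (hcc : 0 ≤ cc) (hcd : 0 ≤ cd) (hTD : 0 ≤ TD)
    (x : Fin 6 → ℝ) (hx3 : 0 ≤ x 2) (i j : Fin 6) (hij : i ≠ j)
    (hxi : x ∈ Dom amax s cr cs lam cc cd TD i)
    (hxj : x ∈ Dom amax s cr cs lam cc cd TD j) : False := by
  have habs : (0:ℝ) ≤ |x 2 - x 1| / amax := div_nonneg (abs_nonneg _) hamax.le
  have h0 : deltaE amax s x ≤ deltaR amax s cr x := by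
    have : 0 ≤ cr * TR amax x * x 2 := mul_nonneg (mul_nonneg hcr.le habs) hx3
    unfold deltaE deltaR
    split <;> linarith
  have h1 : deltaR amax s cr x ≤ deltaS amax s cs lam x := by
    have key : cr * TR amax x * x 2 ≤ cs * TS amax lam x * x 2 := by
      unfold TR TS
      have h1' : |x 2 - x 1| / amax * x 2 ≤ lam * |x 2 - x 1| / amax * x 2 := by
        rw [mul_div_assoc]
        nlinarith [mul_nonneg habs hx3]
      nlinarith [mul_nonneg habs hx3, mul_nonneg (mul_nonneg habs hx3) (sub_nonneg.2 hcrcs)]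
    unfold deltaR deltaS
    split <;> linarith
  have h2 : deltaS amax s cs lam x ≤ deltaC amax s cs lam cc x := by
    unfold deltaC
    split
    · rfl
    · exact le_add_of_nonneg_right (mul_nonneg hcc (Real.sqrt_nonneg _))
  have h3 : x 1 = 0 → deltaC amax s cs lam cc x = deltaS amax s cs lam x := by
    intro hx1
    unfold deltaC
    rw [if_neg (by rw [hx1]; exact lt_irrefl 0), hx1]
    simp
  have e0 : ∀ h, Dom amax s cr cs lam cc cd TD (⟨0, h⟩ : Fin 6) =
      ({x | x 0 > deltaS amax s cs lam x ∧ x 1 ≥ 0} ∪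
        {x | x 0 > max (deltaD amax s cs lam cd TD x) (deltaS amax s cs lam x) ∧ x 1 < 0}) :=
    fun _ => rfl
  have e1 : ∀ h, Dom amax s cr cs lam cc cd TD (⟨1, h⟩ : Fin 6) =
      {x | x 1 < 0 ∧ max (deltaS amax s cs lam x) (deltaC amax s cs lam cc x) < x 0 ∧
        x 0 ≤ deltaD amax s cs lam cd TD x} := fun _ => rfl
  have e2 : ∀ h, Dom amax s cr cs lam cc cd TD (⟨2, h⟩ : Fin 6) =
      ({x | x 1 ≤ 0 ∧ deltaS amax s cs lam x < x 0 ∧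
          x 0 < min (deltaD amax s cs lam cd TD x) (deltaC amax s cs lam cc x)} ∪
        {x | x 1 > 0 ∧ deltaR amax s cr x < x 0 ∧ x 0 ≤ deltaS amax s cs lam x}) := fun _ => rfl
  have e3 : ∀ h, Dom amax s cr cs lam cc cd TD (⟨3, h⟩ : Fin 6) =
      ({x | x 1 ≤ 0 ∧ deltaR amax s cr x < x 0 ∧ x 0 ≤ deltaS amax s cs lam x} ∪
        {x | x 1 = 0 ∧ x 0 = deltaR amax s cr x}) := fun _ => rfl
  have e4 : ∀ h, Dom amax s cr cs lam cc cd TD (⟨4, h⟩ : Fin 6) =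
      ({x | deltaE amax s x ≤ x 0 ∧ x 0 ≤ deltaR amax s cr x} \
        {x | x 1 = 0 ∧ x 0 = deltaR amax s cr x}) := fun _ => rfl
  have e5 : ∀ h, Dom amax s cr cs lam cc cd TD (⟨5, h⟩ : Fin 6) =
      {x | x 0 < deltaE amax s x} := fun _ => rfl
  fin_cases i <;> fin_cases j <;> first
    | exact hij rfl
    | (simp only [e0, e1, e2, e3, e4, e5,
        Set.mem_union, Set.mem_setOf_eq, Set.mem_diff, lt_min_iff, max_lt_iff, lt_max_iff,
        not_and, not_lt] at hxi hxj;
       casesm* (_ ∨ _), (_ ∧ _) <;>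
       first
         | linarith
         | tauto
         | (rw [h3 (le_antisymm (by linarith) (by linarith))] at *; linarith))
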